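/- Let S(∂u, ∂v) = S^{αβ} ∂_α u ∂_β v with constant coefficients satisfying the null condition S^{αβ} ξ_α ξ_β = 0 whenever ξ₀² = c²(ξ₁²+ξ₂²+ξ₃²). Then there is a constant C such that for all C¹ functions u, v on ℝ^{1+3} and all (t,x) with r = |x| ≥ ct/2, |S^{αβ} ∂_α u ∂_β v| ≤ (C/⟨r⟩)[ |Γu| |∂v| + |∂u| |Γv| + ⟨ct − r⟩ |∂u| |∂v| ]. -/

import Mathlib

/-!
Everything is pointwise algebra in the covectors `p = ∂u(y)`, `q = ∂v(y)`. For `r ≥ 1` put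
`ω = x / r` and `m = (-c, ω)`; the null condition says `S(m, m) = 0`, so splitting
`p = (ω·p) m + (p - (ω·p) m)` and likewise `q` leaves only terms containing a good component
`p - (ω·p) m`. Its spatial part is `r⁻¹ ∑ⱼ ωⱼ Ωⱼᵢ`, and its time part `∂_t + c ∂_r` equals
`t⁻¹ (t ∂_t + r ∂_r - (ct - r) ∂_r)`, which is `O((|Γu| + ⟨ct - r⟩ |∂u|) / r)` when `r ≤ 2ct`;
when `r > 2ct` one has `r < 2 ⟨ct - r⟩` instead. So every good component gains `⟨r⟩⁻¹`.
For `r ≤ 1` the trivial bound suffices since `⟨r⟩ ≤ 2`.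
-/

/-- Partial derivative `∂_α` on `ℝ^{1+3}` (coordinate `0` is time). -/
noncomputable def pd (α : Fin 4) (u : (Fin 4 → ℝ) → ℝ) : (Fin 4 → ℝ) → ℝ :=
  fun y => fderiv ℝ u y (Pi.single α 1)

/-- Rotation vector field `Ω_{ij} = xⁱ ∂_j - xʲ ∂_i`. -/
noncomputable def rotVF (i j : Fin 3) (u : (Fin 4 → ℝ) → ℝ) : (Fin 4 → ℝ) → ℝ :=
  fun y => y i.succ * pd j.succ u y - y j.succ * pd i.succ u y

/-- Scaling vector field `S = t ∂_t + r ∂_r = Σ_α x^α ∂_α`. -/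
noncomputable def scalingVF (u : (Fin 4 → ℝ) → ℝ) : (Fin 4 → ℝ) → ℝ :=
  fun y => ∑ α : Fin 4, y α * pd α u y

/-- Spatial radius `r = |x|` at a spacetime point `y = (t, x)`. -/
noncomputable def spr (y : Fin 4 → ℝ) : ℝ := Real.sqrt (∑ i : Fin 3, (y i.succ) ^ 2)

/-- Japanese bracket `⟨s⟩ = √(1+s²)`. -/
noncomputable def jb (s : ℝ) : ℝ := Real.sqrt (1 + s ^ 2)

/-- `|∂u|` : sum of the magnitudes of all first derivatives. -/
noncomputable def dAbs (u : (Fin 4 → ℝ) → ℝ) (y : Fin 4 → ℝ) : ℝ :=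
  ∑ α : Fin 4, |pd α u y|

/-- `|Γu|` : sum of `|Γ_a u|` over the eight fields `(∂, Ω, S)`. -/
noncomputable def gammaAbs (u : (Fin 4 → ℝ) → ℝ) (y : Fin 4 → ℝ) : ℝ :=
  (∑ α : Fin 4, |pd α u y|) +
    (∑ i : Fin 3, ∑ j : Fin 3, if i < j then |rotVF i j u y| else 0) +
    |scalingVF u y|

open Finset

lemma one_le_jb (s : ℝ) : 1 ≤ jb s :=
  Real.one_le_sqrt.2 (by nlinarith [sq_nonneg s])

lemma jb_pos (s : ℝ) : 0 < jb s := one_pos.trans_le (one_le_jb s)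

lemma abs_le_jb (s : ℝ) : |s| ≤ jb s :=
  Real.abs_le_sqrt (by linarith)

lemma jb_le_one_add_abs (s : ℝ) : jb s ≤ 1 + |s| := by
  rw [jb, Real.sqrt_le_left (by positivity)]
  nlinarith [abs_nonneg s, sq_abs s]

lemma LinearMap.apply_eq_of_apply_self_eq_zero {R M : Type*} [CommRing R] [AddCommGroup M]
    [Module R M] (B : M →ₗ[R] M →ₗ[R] R) {m : M} (hm : B m m = 0) (p q : M) (a b : R) :
    B p q = a * B m (q - b • m) + B (p - a • m) q := by
  simp only [map_sub, map_smul, LinearMap.sub_apply, LinearMap.smul_apply, hm, smul_eq_mul]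
  ring

section Bilinear

variable {ι : Type*} [Fintype ι] (S : ι → ι → ℝ) (p q : ι → ℝ)

lemma sum_sum_mul_eq_toLinearMap₂' [DecidableEq ι] :
    ∑ α, ∑ β, S α β * p α * q β = Matrix.toLinearMap₂' ℝ (Matrix.of S) p q := by
  simp only [Matrix.toLinearMap₂'_apply, Matrix.of_apply, smul_eq_mul]
  exact sum_congr rfl fun α _ => sum_congr rfl fun β _ => by ring

lemma sum_sum_abs_nonneg : 0 ≤ ∑ α, ∑ β, |S α β| :=
  sum_nonneg fun _ _ => sum_nonneg fun _ _ => abs_nonneg _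

lemma abs_sum_sum_mul_le :
    |∑ α, ∑ β, S α β * p α * q β| ≤ (∑ α, ∑ β, |S α β|) * ‖p‖ * ‖q‖ := by
  rw [sum_mul, sum_mul]
  refine (abs_sum_le_sum_abs _ _).trans (sum_le_sum fun α _ => ?_)
  rw [sum_mul, sum_mul]
  refine (abs_sum_le_sum_abs _ _).trans (sum_le_sum fun β _ => ?_)
  rw [abs_mul, abs_mul, mul_assoc, mul_assoc]
  gcongr
  exacts [norm_le_pi_norm p α, norm_le_pi_norm q β]

end Bilinear

section Geometry

variable (c : ℝ) (y p : Fin 4 → ℝ)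

-- With `p = ∂u(y)` these are `dAbs u y` and `gammaAbs u y`, definitionally.
def absSum : ℝ := ∑ α, |p α|

noncomputable def radialDeriv : ℝ := ∑ i : Fin 3, y i.succ / spr y * p i.succ

noncomputable def nullVector : Fin 4 → ℝ := Fin.cons (-c) fun i => y i.succ / spr y

def rotationSum : ℝ :=
  ∑ i : Fin 3, ∑ j : Fin 3, if i < j then |y i.succ * p j.succ - y j.succ * p i.succ| else 0

def gammaNorm : ℝ := absSum p + rotationSum y p + |∑ α, y α * p α|

lemma spr_sq : spr y ^ 2 = ∑ i : Fin 3, y i.succ ^ 2 :=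
  Real.sq_sqrt (by positivity)

lemma abs_le_spr (i : Fin 3) : |y i.succ| ≤ spr y :=
  Real.abs_le_sqrt (single_le_sum (f := fun j : Fin 3 => y j.succ ^ 2)
    (fun _ _ => sq_nonneg _) (mem_univ i))

lemma spr_nonneg : 0 ≤ spr y := Real.sqrt_nonneg _

lemma abs_div_spr_le_one (i : Fin 3) : |y i.succ / spr y| ≤ 1 := by
  rw [abs_div, abs_of_nonneg (spr_nonneg y)]
  exact div_le_one_of_le₀ (abs_le_spr y i) (spr_nonneg y)

lemma absSum_nonneg : 0 ≤ absSum p := sum_nonneg fun _ _ => abs_nonneg _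

lemma absSum_eq_abs_zero_add : absSum p = |p 0| + ∑ i : Fin 3, |p i.succ| := Fin.sum_univ_succ _

lemma abs_le_absSum (α : Fin 4) : |p α| ≤ absSum p :=
  single_le_sum (f := fun β => |p β|) (fun _ _ => abs_nonneg _) (mem_univ α)

lemma norm_le_absSum : ‖p‖ ≤ absSum p :=
  (pi_norm_le_iff_of_nonneg (absSum_nonneg p)).2 (abs_le_absSum p)

lemma rotationSum_nonneg : 0 ≤ rotationSum y p :=
  sum_nonneg fun i _ => sum_nonneg fun j _ => by positivity

lemma absSum_le_gammaNorm : absSum p ≤ gammaNorm y p := by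
  have := rotationSum_nonneg y p
  unfold gammaNorm; linarith [abs_nonneg (∑ α, y α * p α)]

lemma gammaNorm_nonneg : 0 ≤ gammaNorm y p := (absSum_nonneg p).trans (absSum_le_gammaNorm y p)

lemma rotationSum_le_gammaNorm : rotationSum y p ≤ gammaNorm y p := by
  have := absSum_nonneg p
  unfold gammaNorm; linarith [abs_nonneg (∑ α, y α * p α)]

lemma abs_scaling_le_gammaNorm : |∑ α, y α * p α| ≤ gammaNorm y p := by
  have := absSum_nonneg p
  have := rotationSum_nonneg y p
  unfold gammaNorm; linarith

lemma abs_rotation_le_rotationSum (i j : Fin 3) :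
    |y i.succ * p j.succ - y j.succ * p i.succ| ≤ rotationSum y p := by
  have ordered : ∀ i j : Fin 3, i < j →
      |y i.succ * p j.succ - y j.succ * p i.succ| ≤ rotationSum y p := fun i j hij =>
    calc _ = if i < j then |y i.succ * p j.succ - y j.succ * p i.succ| else 0 := (if_pos hij).symm
      _ ≤ ∑ j' : Fin 3, if i < j' then |y i.succ * p j'.succ - y j'.succ * p i.succ| else 0 :=
        single_le_sum (f := fun j' : Fin 3 =>
            if i < j' then |y i.succ * p j'.succ - y j'.succ * p i.succ| else 0)
          (fun _ _ => by positivity) (mem_univ j)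
      _ ≤ rotationSum y p :=
        single_le_sum (f := fun i' : Fin 3 => ∑ j' : Fin 3,
            if i' < j' then |y i'.succ * p j'.succ - y j'.succ * p i'.succ| else 0)
          (fun _ _ => sum_nonneg fun _ _ => by positivity) (mem_univ i)
  rcases lt_trichotomy i j with hij | rfl | hji
  · exact ordered i j hij
  · simpa using rotationSum_nonneg y p
  · rw [abs_sub_comm]; exact ordered j i hji

lemma abs_radialDeriv_le : |radialDeriv y p| ≤ absSum p := by
  calc |radialDeriv y p| ≤ ∑ i : Fin 3, |y i.succ / spr y * p i.succ| := abs_sum_le_sum_abs _ _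
    _ ≤ ∑ i : Fin 3, |p i.succ| := sum_le_sum fun i _ => by
        rw [abs_mul]; exact mul_le_of_le_one_left (abs_nonneg _) (abs_div_spr_le_one y i)
    _ ≤ absSum p := by rw [absSum_eq_abs_zero_add]; linarith [abs_nonneg (p 0)]

variable {y}

lemma spr_mul_radialDeriv (hr : spr y ≠ 0) :
    spr y * radialDeriv y p = ∑ i : Fin 3, y i.succ * p i.succ := by
  rw [radialDeriv, mul_sum]
  exact sum_congr rfl fun i _ => by field_simp

lemma nullVector_isNull (hr : spr y ≠ 0) :
    nullVector c y 0 ^ 2 = c ^ 2 * ∑ i : Fin 3, nullVector c y i.succ ^ 2 := by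
  simp only [nullVector, Fin.cons_zero, Fin.cons_succ, div_pow, ← sum_div, ← spr_sq]
  field_simp

lemma norm_nullVector_le {c : ℝ} (hc : 0 ≤ c) (y : Fin 4 → ℝ) : ‖nullVector c y‖ ≤ c + 1 := by
  refine (pi_norm_le_iff_of_nonneg (by linarith)).2 fun α => ?_
  induction α using Fin.cases with
  | zero => simp [nullVector, abs_of_nonneg hc]
  | succ i =>
    simp only [nullVector, Fin.cons_succ, Real.norm_eq_abs]
    linarith [abs_div_spr_le_one y i]

end Geometry

section GoodDerivatives

variable {c : ℝ} {y : Fin 4 → ℝ} (p : Fin 4 → ℝ)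

lemma spr_mul_abs_angular_le (hr : spr y ≠ 0) (i : Fin 3) :
    spr y * |p i.succ - radialDeriv y p * (y i.succ / spr y)| ≤ 3 * rotationSum y p := by
  have hr0 : 0 < spr y := (spr_nonneg y).lt_of_ne' hr
  have expand : spr y * (spr y * (p i.succ - radialDeriv y p * (y i.succ / spr y))) =
      ∑ j : Fin 3, y j.succ * (y j.succ * p i.succ - y i.succ * p j.succ) := by
    have : spr y * (spr y * (p i.succ - radialDeriv y p * (y i.succ / spr y))) =
        spr y ^ 2 * p i.succ - y i.succ * (spr y * radialDeriv y p) := by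
      field_simp
    rw [this, spr_mul_radialDeriv p hr, spr_sq, sum_mul, mul_sum, ← sum_sub_distrib]
    exact sum_congr rfl fun j _ => by ring
  refine le_of_mul_le_mul_left ?_ hr0
  calc spr y * (spr y * |p i.succ - radialDeriv y p * (y i.succ / spr y)|)
      = |∑ j : Fin 3, y j.succ * (y j.succ * p i.succ - y i.succ * p j.succ)| := by
        rw [← expand, abs_mul, abs_mul, abs_of_pos hr0]
    _ ≤ ∑ j : Fin 3, |y j.succ| * |y j.succ * p i.succ - y i.succ * p j.succ| :=
        (abs_sum_le_sum_abs _ _).trans_eq (sum_congr rfl fun j _ => abs_mul _ _)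
    _ ≤ ∑ _j : Fin 3, spr y * rotationSum y p :=
        sum_le_sum fun j _ => mul_le_mul (abs_le_spr y j) (abs_rotation_le_rotationSum y p j i)
          (abs_nonneg _) hr0.le
    _ = spr y * (3 * rotationSum y p) := by simp only [sum_const, card_univ, Fintype.card_fin]; ring

lemma spr_mul_abs_temporal_le (hc : 0 ≤ c) (hr : spr y ≠ 0) :
    spr y * |p 0 + c * radialDeriv y p| ≤
      2 * (c + 1) * (|∑ α, y α * p α| + jb (c * y 0 - spr y) * absSum p) := by
  set a := radialDeriv y p
  set J := jb (c * y 0 - spr y)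
  have ha : |a| ≤ absSum p := abs_radialDeriv_le y p
  have hp0 := abs_le_absSum p 0
  have hA := absSum_nonneg p
  have hJ : |c * y 0 - spr y| ≤ J := abs_le_jb _
  rcases le_or_gt (spr y) (2 * (c * y 0)) with hnear | hinterior
  · have scaling : y 0 * (p 0 + c * a) = ∑ α, y α * p α + (c * y 0 - spr y) * a := by
      rw [Fin.sum_univ_succ, ← spr_mul_radialDeriv p hr]; ring
    have hscaling : |y 0 * (p 0 + c * a)| ≤ |∑ α, y α * p α| + J * absSum p := by
      rw [scaling]
      refine (abs_add_le _ _).trans (add_le_add_right ?_ _)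
      rw [abs_mul]
      exact mul_le_mul hJ ha (abs_nonneg _) ((abs_nonneg _).trans hJ)
    calc spr y * |p 0 + c * a| ≤ 2 * (c * |y 0|) * |p 0 + c * a| := by
          gcongr; exact hnear.trans (by gcongr; exact le_abs_self _)
      _ = 2 * c * |y 0 * (p 0 + c * a)| := by rw [abs_mul]; ring
      _ ≤ 2 * (c + 1) * (|∑ α, y α * p α| + J * absSum p) := by
          gcongr
          linarith
  · have hrJ : spr y ≤ 2 * J := by linarith [neg_abs_le (c * y 0 - spr y)]
    have hX : |p 0 + c * a| ≤ (c + 1) * absSum p := by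
      refine (abs_add_le _ _).trans ?_
      rw [abs_mul, abs_of_nonneg hc]
      nlinarith
    calc spr y * |p 0 + c * a| ≤ 2 * J * ((c + 1) * absSum p) :=
          mul_le_mul hrJ hX (abs_nonneg _) (by linarith [one_le_jb (c * y 0 - spr y)])
      _ = 2 * (c + 1) * (J * absSum p) := by ring
      _ ≤ 2 * (c + 1) * (|∑ α, y α * p α| + J * absSum p) := by
          gcongr; exact le_add_of_nonneg_left (abs_nonneg _)

lemma spr_mul_norm_sub_le (hc : 0 ≤ c) (hr : spr y ≠ 0) :
    spr y * ‖p - radialDeriv y p • nullVector c y‖ ≤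
      3 * (c + 1) * (gammaNorm y p + jb (c * y 0 - spr y) * absSum p) := by
  have hJA : 0 ≤ jb (c * y 0 - spr y) * absSum p :=
    mul_nonneg (jb_pos _).le (absSum_nonneg p)
  have hK : 0 ≤ 3 * (c + 1) * (gammaNorm y p + jb (c * y 0 - spr y) * absSum p) :=
    mul_nonneg (by linarith) (add_nonneg (gammaNorm_nonneg y p) hJA)
  suffices h : ‖spr y • (p - radialDeriv y p • nullVector c y)‖ ≤
      3 * (c + 1) * (gammaNorm y p + jb (c * y 0 - spr y) * absSum p) by
    rwa [norm_smul, Real.norm_eq_abs, abs_of_nonneg (spr_nonneg y)] at h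
  refine (pi_norm_le_iff_of_nonneg hK).2 fun α => ?_
  rw [Pi.smul_apply, smul_eq_mul, Real.norm_eq_abs, abs_mul, abs_of_nonneg (spr_nonneg y)]
  induction α using Fin.cases with
  | zero =>
    have htemporal := spr_mul_abs_temporal_le p hc hr
    have hS := abs_scaling_le_gammaNorm y p
    have : (p - radialDeriv y p • nullVector c y) 0 = p 0 + c * radialDeriv y p := by
      simp only [Pi.sub_apply, Pi.smul_apply, nullVector, Fin.cons_zero, smul_eq_mul]; ring
    rw [this]
    nlinarith
  | succ i =>
    have hangular := spr_mul_abs_angular_le p hr i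
    have hR := rotationSum_le_gammaNorm y p
    have hΓ := gammaNorm_nonneg y p
    have : (p - radialDeriv y p • nullVector c y) i.succ =
        p i.succ - radialDeriv y p * (y i.succ / spr y) := rfl
    rw [this]
    nlinarith

lemma jb_spr_mul_norm_sub_le (hc : 0 ≤ c) (hr : 1 ≤ spr y) :
    jb (spr y) * ‖p - radialDeriv y p • nullVector c y‖ ≤
      6 * (c + 1) * (gammaNorm y p + jb (c * y 0 - spr y) * absSum p) := by
  have hgood := spr_mul_norm_sub_le p hc (by linarith : spr y ≠ 0)
  have hjb : jb (spr y) ≤ 2 * spr y := by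
    linarith [jb_le_one_add_abs (spr y), abs_of_nonneg (spr_nonneg y)]
  calc jb (spr y) * ‖p - radialDeriv y p • nullVector c y‖
      ≤ 2 * spr y * ‖p - radialDeriv y p • nullVector c y‖ := by gcongr
    _ ≤ _ := by linarith

end GoodDerivatives

section NullForm

variable {c : ℝ} (S : Fin 4 → Fin 4 → ℝ) {y : Fin 4 → ℝ} (p q : Fin 4 → ℝ)

noncomputable def nullFormBound (c : ℝ) (y p q : Fin 4 → ℝ) : ℝ :=
  gammaNorm y p * absSum q + absSum p * gammaNorm y q +
    jb (c * y 0 - spr y) * absSum p * absSum q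

lemma jb_mul_absSum_mul_absSum_le_nullFormBound :
    jb (c * y 0 - spr y) * absSum p * absSum q ≤ nullFormBound c y p q := by
  have := mul_nonneg (gammaNorm_nonneg y p) (absSum_nonneg q)
  have := mul_nonneg (absSum_nonneg p) (gammaNorm_nonneg y q)
  unfold nullFormBound; linarith

lemma absSum_mul_absSum_le_nullFormBound : absSum p * absSum q ≤ nullFormBound c y p q :=
  (le_mul_of_one_le_left (mul_nonneg (absSum_nonneg p) (absSum_nonneg q)) (one_le_jb _)).trans
    ((mul_assoc _ _ _).symm.trans_le (jb_mul_absSum_mul_absSum_le_nullFormBound p q))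

lemma nullFormBound_nonneg : 0 ≤ nullFormBound c y p q :=
  (mul_nonneg (absSum_nonneg p) (absSum_nonneg q)).trans (absSum_mul_absSum_le_nullFormBound p q)

lemma jb_mul_abs_nullForm_le_of_one_le_spr (hc : 0 ≤ c)
    (hnull : ∀ ξ : Fin 4 → ℝ, ξ 0 ^ 2 = c ^ 2 * ∑ i : Fin 3, (ξ i.succ) ^ 2 →
      ∑ α : Fin 4, ∑ β : Fin 4, S α β * ξ α * ξ β = 0) (hr : 1 ≤ spr y) :
    jb (spr y) * |∑ α, ∑ β, S α β * p α * q β| ≤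
      12 * (∑ α, ∑ β, |S α β|) * (c + 1) ^ 2 * nullFormBound c y p q := by
  set M := ∑ α, ∑ β, |S α β|
  set J := jb (c * y 0 - spr y)
  set m := nullVector c y
  set a := radialDeriv y p
  set b := radialDeriv y q
  have hM : 0 ≤ M := sum_sum_abs_nonneg S
  have hc1 : 0 ≤ c + 1 := by linarith
  have hJ : 0 ≤ J := (jb_pos _).le
  have hAp := absSum_nonneg p
  have hAq := absSum_nonneg q
  have hΓp := gammaNorm_nonneg y p
  -- `S(m, m) = 0` kills the term `a b S(m, m)` of the expansion along `m`
  have split : ∑ α, ∑ β, S α β * p α * q β =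
      a * ∑ α, ∑ β, S α β * m α * (q - b • m) β + ∑ α, ∑ β, S α β * (p - a • m) α * q β := by
    simp only [sum_sum_mul_eq_toLinearMap₂']
    refine LinearMap.apply_eq_of_apply_self_eq_zero _ ?_ p q a b
    rw [← sum_sum_mul_eq_toLinearMap₂']
    exact hnull m (nullVector_isNull c (by linarith))
  have hgood_p := jb_spr_mul_norm_sub_le p hc hr
  have hgood_q := jb_spr_mul_norm_sub_le q hc hr
  calc jb (spr y) * |∑ α, ∑ β, S α β * p α * q β|
      ≤ jb (spr y) * (|a| * (M * ‖m‖ * ‖q - b • m‖) + M * ‖p - a • m‖ * ‖q‖) := by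
        rw [split]
        refine mul_le_mul_of_nonneg_left ?_ (jb_pos _).le
        refine (abs_add_le _ _).trans (add_le_add ?_ (abs_sum_sum_mul_le S _ _))
        rw [abs_mul]
        gcongr
        exact abs_sum_sum_mul_le S _ _
    _ = M * (|a| * ‖m‖ * (jb (spr y) * ‖q - b • m‖) + (jb (spr y) * ‖p - a • m‖) * ‖q‖) := by
        ring
    _ ≤ M * (absSum p * (c + 1) * (6 * (c + 1) * (gammaNorm y q + J * absSum q)) +
          (6 * (c + 1) * (gammaNorm y p + J * absSum p)) * absSum q) := by
        have := mul_nonneg (mul_nonneg (by norm_num : (0 : ℝ) ≤ 6) hc1)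
          (add_nonneg hΓp (mul_nonneg hJ hAp))
        gcongr
        · exact mul_nonneg (jb_pos _).le (norm_nonneg _)
        · exact abs_radialDeriv_le y p
        · exact norm_nullVector_le hc y
        · exact norm_le_absSum q
    _ = 6 * M * (c + 1) * ((c + 1) * (absSum p * gammaNorm y q + J * absSum p * absSum q) +
          (gammaNorm y p * absSum q + J * absSum p * absSum q)) := by ring
    _ ≤ 6 * M * (c + 1) * ((c + 1) * (absSum p * gammaNorm y q + J * absSum p * absSum q) +
          (c + 1) * (gammaNorm y p * absSum q + J * absSum p * absSum q)) := by
        have := mul_nonneg hΓp hAq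
        have := mul_nonneg (mul_nonneg hJ hAp) hAq
        gcongr
        exact le_mul_of_one_le_left (by positivity) (by linarith)
    _ = 6 * M * (c + 1) ^ 2 * (nullFormBound c y p q + J * absSum p * absSum q) := by
        unfold nullFormBound; ring
    _ ≤ 6 * M * (c + 1) ^ 2 * (nullFormBound c y p q + nullFormBound c y p q) := by
        gcongr; exact jb_mul_absSum_mul_absSum_le_nullFormBound p q
    _ = 12 * M * (c + 1) ^ 2 * nullFormBound c y p q := by ring

lemma jb_mul_abs_nullForm_le_of_spr_le_one (hr : spr y ≤ 1) :
    jb (spr y) * |∑ α, ∑ β, S α β * p α * q β| ≤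
      2 * (∑ α, ∑ β, |S α β|) * (absSum p * absSum q) := by
  have hjb : jb (spr y) ≤ 2 := by
    linarith [jb_le_one_add_abs (spr y), abs_of_nonneg (spr_nonneg y)]
  have hM := sum_sum_abs_nonneg S
  have hAp := absSum_nonneg p
  calc jb (spr y) * |∑ α, ∑ β, S α β * p α * q β|
      ≤ 2 * ((∑ α, ∑ β, |S α β|) * ‖p‖ * ‖q‖) :=
        mul_le_mul hjb (abs_sum_sum_mul_le S p q) (abs_nonneg _) zero_le_two
    _ ≤ 2 * ((∑ α, ∑ β, |S α β|) * absSum p * absSum q) := by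
        gcongr
        exacts [norm_le_absSum p, norm_le_absSum q]
    _ = 2 * (∑ α, ∑ β, |S α β|) * (absSum p * absSum q) := by ring

theorem jb_mul_abs_nullForm_le (hc : 0 ≤ c)
    (hnull : ∀ ξ : Fin 4 → ℝ, ξ 0 ^ 2 = c ^ 2 * ∑ i : Fin 3, (ξ i.succ) ^ 2 →
      ∑ α : Fin 4, ∑ β : Fin 4, S α β * ξ α * ξ β = 0) :
    jb (spr y) * |∑ α, ∑ β, S α β * p α * q β| ≤
      12 * (∑ α, ∑ β, |S α β|) * (c + 1) ^ 2 * nullFormBound c y p q := by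
  rcases le_total 1 (spr y) with hfar | hnear
  · exact jb_mul_abs_nullForm_le_of_one_le_spr S p q hc hnull hfar
  · have hM := sum_sum_abs_nonneg S
    have hE := nullFormBound_nonneg (c := c) (y := y) p q
    have : 1 ≤ (c + 1) ^ 2 := one_le_pow₀ (by linarith)
    calc jb (spr y) * |∑ α, ∑ β, S α β * p α * q β|
        ≤ 2 * (∑ α, ∑ β, |S α β|) * (absSum p * absSum q) :=
          jb_mul_abs_nullForm_le_of_spr_le_one S p q hnear
      _ ≤ 2 * (∑ α, ∑ β, |S α β|) * nullFormBound c y p q := by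
          gcongr; exact absSum_mul_absSum_le_nullFormBound p q
      _ ≤ 12 * (∑ α, ∑ β, |S α β|) * (c + 1) ^ 2 * nullFormBound c y p q := by
          nlinarith [mul_nonneg hM hE]

end NullForm

/-- Pointwise semilinear null-form estimate: if `S^{αβ}` satisfies the null condition
relative to the speed `c`, then on the region `r ≥ ct/2`, `t ≥ 0`,
`|S^{αβ} ∂_α u ∂_β v| ≤ (C/⟨r⟩)(|Γu||∂v| + |∂u||Γv| + ⟨ct-r⟩|∂u||∂v|)`. -/
theorem stmt_8 (c : ℝ) (hc : 0 < c) (S : Fin 4 → Fin 4 → ℝ)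
    (hnull : ∀ ξ : Fin 4 → ℝ, ξ 0 ^ 2 = c ^ 2 * ∑ i : Fin 3, (ξ i.succ) ^ 2 →
      ∑ α : Fin 4, ∑ β : Fin 4, S α β * ξ α * ξ β = 0) :
    ∃ C : ℝ, 0 < C ∧ ∀ u v : (Fin 4 → ℝ) → ℝ, ContDiff ℝ 1 u → ContDiff ℝ 1 v →
      ∀ y : Fin 4 → ℝ, 0 ≤ y 0 → c * y 0 / 2 ≤ spr y →
        |∑ α : Fin 4, ∑ β : Fin 4, S α β * pd α u y * pd β v y| ≤
          C / jb (spr y) *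
            (gammaAbs u y * dAbs v y + dAbs u y * gammaAbs v y +
              jb (c * y 0 - spr y) * dAbs u y * dAbs v y) := by
  set M := ∑ α, ∑ β, |S α β|
  have hM : 0 ≤ M := sum_sum_abs_nonneg S
  refine ⟨12 * (M + 1) * (c + 1) ^ 2, by positivity, fun u v _ _ y _ _ => ?_⟩
  rw [div_mul_eq_mul_div, le_div_iff₀ (jb_pos _), mul_comm]
  calc jb (spr y) * |∑ α, ∑ β, S α β * pd α u y * pd β v y|
      ≤ 12 * M * (c + 1) ^ 2 * nullFormBound c y (pd · u y) (pd · v y) :=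
        jb_mul_abs_nullForm_le S _ _ hc.le hnull
    _ ≤ 12 * (M + 1) * (c + 1) ^ 2 * nullFormBound c y (pd · u y) (pd · v y) := by
        have := nullFormBound_nonneg (c := c) (y := y) (pd · u y) (pd · v y)
        gcongr; linarith
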